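/- arXiv:1904.13135 — 3 statements merged into one kernel-verified Lean document; each statement's English description precedes it below -/
import Mathlib

section
/- Let ρ be a congruence on an inverse semigroup S, and define ρ_min by: a ρ_min b iff there exists an idempotent e with ae = be, a⁻¹a ρ e, and b⁻¹b ρ e. Then the canonical map ψ : S/ρ_min → S/ρ is idempotent separating, i.e., if two idempotents of S/ρ_min have the same image under ψ then they are equal. -/
/-!
An idempotent of `S/ρ_min` is the class of an idempotent of `S` (Lallement's lemma), so it
suffices to see that two idempotents `p`, `q` of `S` with `p ρ q` are `ρ_min`-related. The
idempotent `e = pq` witnesses this: `p e = q e = pq`, and `p⁻¹p = p ρ pq` and `q⁻¹q = q ρ pq`.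
-/

class InverseSemigroup (S : Type*) extends Semigroup S, Inv S where
  mul_inv_mul : ∀ a : S, a * a⁻¹ * a = a
  inv_mul_inv : ∀ a : S, a⁻¹ * a * a⁻¹ = a⁻¹
  idem_comm : ∀ e f : S, e * e = e → f * f = f → e * f = f * e

/-- `a ρ_min b` iff there is an idempotent `e` with `a*e = b*e`, `a⁻¹a ρ e` and `b⁻¹b ρ e`. -/
def rhoMin {S : Type*} [InverseSemigroup S] (ρ : Con S) (a b : S) : Prop :=
  ∃ e : S, e * e = e ∧ a * e = b * e ∧ ρ (a⁻¹ * a) e ∧ ρ (b⁻¹ * b) e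

namespace InverseSemigroup

variable {S : Type*} [InverseSemigroup S]

lemma commute_of_isIdempotentElem {e f : S} (he : IsIdempotentElem e)
    (hf : IsIdempotentElem f) : Commute e f :=
  idem_comm e f he hf

lemma mul_inv_mul_eq_self (a : S) : a * (a⁻¹ * a) = a := by
  rw [← mul_assoc, mul_inv_mul]

lemma inv_eq_self_of_isIdempotentElem {e : S} (he : IsIdempotentElem e) : e⁻¹ = e := by
  set x := e⁻¹
  have hexe : e * x * e = e := mul_inv_mul e
  have hxex : x * e * x = x := inv_mul_inv e
  have hex : IsIdempotentElem (e * x) := by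
    rw [IsIdempotentElem, ← mul_assoc, hexe]
  have hxe : IsIdempotentElem (x * e) := by
    rw [IsIdempotentElem, ← mul_assoc, hxex]
  -- `e` commutes with the idempotents `e x` and `x e`, which absorb it on either side.
  have hex_eq : e * x = e :=
    calc e * x = e * (e * x) := (he.mul_self_mul x).symm
      _ = e * x * e := (commute_of_isIdempotentElem he hex).eq
      _ = e := hexe
  have hxe_eq : x * e = e :=
    calc x * e = x * e * e := (he.mul_mul_self x).symm
      _ = e * (x * e) := (commute_of_isIdempotentElem hxe he).eq
      _ = e := by rw [← mul_assoc, hexe]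
  calc x = x * e * x := hxex.symm
    _ = e := by rw [hxe_eq, hex_eq]

lemma exists_isIdempotentElem_rel_of_rel_mul_self {σ : Con S} {a : S} (ha : σ (a * a) a) :
    ∃ p : S, IsIdempotentElem p ∧ σ p a := by
  set x := (a * a)⁻¹
  refine ⟨a * x * a, ?_, ?_⟩
  · calc a * x * a * (a * x * a) = a * (x * (a * a) * x) * a := by simp only [mul_assoc]
      _ = a * x * a := by rw [inv_mul_inv]
  · have h : σ (a * x * a) (a * a * x * (a * a)) :=
      σ.mul (σ.mul (σ.symm ha) (σ.refl x)) (σ.symm ha)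
    rw [mul_inv_mul] at h
    exact σ.trans h ha

lemma rel_of_rhoMin {ρ : Con S} {a b : S} (h : rhoMin ρ a b) : ρ a b := by
  obtain ⟨e, -, hab, ha, hb⟩ := h
  have ha' : ρ a (a * e) := by
    simpa only [mul_inv_mul_eq_self] using ρ.mul (ρ.refl a) ha
  have hb' : ρ b (a * e) := by
    simpa only [mul_inv_mul_eq_self, hab] using ρ.mul (ρ.refl b) hb
  exact ρ.trans ha' (ρ.symm hb')

lemma rhoMin_of_isIdempotentElem {ρ : Con S} {p q : S} (hp : IsIdempotentElem p)
    (hq : IsIdempotentElem q) (hpq : ρ p q) : rhoMin ρ p q := by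
  have hcomm := commute_of_isIdempotentElem hp hq
  refine ⟨p * q, hp.mul_of_commute hcomm hq, ?_, ?_, ?_⟩
  · rw [hp.mul_self_mul, hcomm.eq, hq.mul_self_mul]
  · rw [inv_eq_self_of_isIdempotentElem hp]
    exact ρ.mul (ρ.refl p) hpq
  · rw [inv_eq_self_of_isIdempotentElem hq]
    exact ρ.mul (ρ.symm hpq) (ρ.refl q)

end InverseSemigroup

open InverseSemigroup in
/-- if `σ` is a congruence whose relation is `ρ_min`, then the canonical
map `ψ : S/σ → S/ρ` is idempotent separating: whenever the `σ`-classes of `a` and `b` are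
idempotents of `S/σ` (i.e. `σ (a*a) a` and `σ (b*b) b`) with the same image under `ψ`
(i.e. `ρ a b`), the classes are equal (i.e. `σ a b`). -/
theorem stmt1 {S : Type*} [InverseSemigroup S] (ρ σ : Con S)
    (hσ : ∀ a b : S, σ a b ↔ rhoMin ρ a b) :
    ∀ a b : S, σ (a * a) a → σ (b * b) b → ρ a b → σ a b := by
  intro a b ha hb hab
  obtain ⟨p, hp, hpa⟩ := exists_isIdempotentElem_rel_of_rel_mul_self ha
  obtain ⟨q, hq, hqb⟩ := exists_isIdempotentElem_rel_of_rel_mul_self hb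
  have hσρ : ∀ {x y : S}, σ x y → ρ x y := fun h => rel_of_rhoMin ((hσ _ _).1 h)
  have hρpq : ρ p q := ρ.trans (hσρ hpa) (ρ.trans hab (ρ.symm (hσρ hqb)))
  have hσpq : σ p q := (hσ p q).2 (rhoMin_of_isIdempotentElem hp hq hρpq)
  exact σ.trans (σ.symm hpa) (σ.trans hσpq hqb)
end

section
/- Let G be a monoidal pseudoregular groupoid. For idempotents e ≥ f of V(G), the map φ_f^e : π_e^⋈(G) → π_f^⋈(G), α ↦ f ▷ α ◁ f, is a group homomorphism, and these maps form a presheaf: φ_e^e = id and φ_f^e φ_g^f = φ_g^e whenever e ≥ f ≥ g. Moreover the action α ◁ s = s⁻¹ ▷ α ◁ s for s ∈ V(G) makes the family {π_e^⋈(G)} a V(G)-module in the sense of Lausch. -/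
/-!
An element of `π_e^⋈(G)` is the same thing as an arrow `α : e → e` with `e ▷ α ◁ e = α`, and
on such arrows `α ∗ β` is just the composite `α ∘ β`. Since `s⁻¹ ▷ - ◁ s` distributes over
composable pairs, it is a homomorphism `π_e^⋈(G) → π_{s⁻¹es}^⋈(G)`; the structure map `φ_f^e`
is the special case of an idempotent `s = f = f⁻¹`. The remaining identities are the
inverse-monoid facts `(st)⁻¹ = t⁻¹s⁻¹` and `e⁻¹ = e` for idempotents.
-/

/-- An inverse monoid. -/
class InverseMonoid (M : Type*) extends Monoid M, Inv M where
  mul_inv_mul : ∀ a : M, a * a⁻¹ * a = a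
  inv_mul_inv : ∀ a : M, a⁻¹ * a * a⁻¹ = a⁻¹
  idem_comm : ∀ e f : M, e * e = e → f * f = f → e * f = f * e

/-- A semiregular groupoid: a groupoid (given algebraically by its set of arrows `G`
over a vertex monoid `V`, with totalised composition `comp` whose axioms are guarded by
the composability condition `r α = d β`) together with left and right actions of the
vertex monoid `V` on arrows, satisfying the axioms of Definition 2.1. -/
structure SemiregularGroupoid (V : Type*) [Monoid V] (G : Type*) where
  d : G → V
  r : G → V
  comp : G → G → G
  id : V → G
  inv : G → G
  d_id : ∀ v, d (id v) = v
  r_id : ∀ v, r (id v) = v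
  d_comp : ∀ α β, r α = d β → d (comp α β) = d α
  r_comp : ∀ α β, r α = d β → r (comp α β) = r β
  comp_assoc : ∀ α β γ, r α = d β → r β = d γ →
    comp (comp α β) γ = comp α (comp β γ)
  id_comp : ∀ α, comp (id (d α)) α = α
  comp_id : ∀ α, comp α (id (r α)) = α
  d_inv : ∀ α, d (inv α) = r α
  r_inv : ∀ α, r (inv α) = d α
  comp_inv : ∀ α, comp α (inv α) = id (d α)
  inv_comp : ∀ α, comp (inv α) α = id (r α)
  actL : V → G → G
  actR : G → V → G
  actL_mul : ∀ x y α, actL (x * y) α = actL x (actL y α)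
  actR_mul : ∀ α x y, actR α (x * y) = actR (actR α x) y
  actL_actR : ∀ x α y, actR (actL x α) y = actL x (actR α y)
  one_actL : ∀ α, actL 1 α = α
  actR_one : ∀ α, actR α 1 = α
  d_actL : ∀ x α, d (actL x α) = x * d α
  d_actR : ∀ α x, d (actR α x) = d α * x
  r_actL : ∀ x α, r (actL x α) = x * r α
  r_actR : ∀ α x, r (actR α x) = r α * x
  actL_comp : ∀ x α β, r α = d β → actL x (comp α β) = comp (actL x α) (actL x β)
  actR_comp : ∀ α β x, r α = d β → actR (comp α β) x = comp (actR α x) (actR β x)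
  actL_id : ∀ x y, actL x (id y) = id (x * y)
  actR_id : ∀ x y, actR (id x) y = id (x * y)

/-- The operation `α ∗ β = (α ◁ βd) ∘ (αr ▷ β)`. -/
def SemiregularGroupoid.star {V : Type*} [Monoid V] {G : Type*}
    (S : SemiregularGroupoid V G) (α β : G) : G :=
  S.comp (S.actR α (S.d β)) (S.actL (S.r α) β)

/-- The operation `α ⊛ β = (αd ▷ β) ∘ (α ◁ βr)`. -/
def SemiregularGroupoid.ostar {V : Type*} [Monoid V] {G : Type*}
    (S : SemiregularGroupoid V G) (α β : G) : G :=
  S.comp (S.actL (S.d α) β) (S.actR α (S.r β))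

/-- `star_e^⋈(G) = {e ▷ α ◁ e : αd = e}`. -/
def bowtieStar {V : Type*} [InverseMonoid V] {G : Type*}
    (S : SemiregularGroupoid V G) (e : V) : Set G :=
  {γ | ∃ α : G, S.d α = e ∧ γ = S.actL e (S.actR α e)}

/-- `π_e^⋈(G) = {α ∈ star_e^⋈(G) : αr = e}`. -/
def bowtiePi {V : Type*} [InverseMonoid V] {G : Type*}
    (S : SemiregularGroupoid V G) (e : V) : Set G :=
  {γ ∈ bowtieStar S e | S.r γ = e}

/-- The structure map `φ_f^e : α ↦ f ▷ α ◁ f`. -/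
def phiMap {V : Type*} [InverseMonoid V] {G : Type*}
    (S : SemiregularGroupoid V G) (f : V) (γ : G) : G :=
  S.actL f (S.actR γ f)

/-- The action `α ◁ s = s⁻¹ ▷ α ◁ s`. -/
def actM {V : Type*} [InverseMonoid V] {G : Type*}
    (S : SemiregularGroupoid V G) (s : V) (γ : G) : G :=
  S.actL s⁻¹ (S.actR γ s)

namespace InverseMonoid

variable {M : Type*} [InverseMonoid M]

theorem isIdempotentElem_mul_of_mul_mul_self {a b : M} (h : a * b * a = a) :
    IsIdempotentElem (a * b) := by
  change a * b * (a * b) = a * b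
  rw [← mul_assoc, h]

theorem isIdempotentElem_mul_inv (a : M) : IsIdempotentElem (a * a⁻¹) :=
  isIdempotentElem_mul_of_mul_mul_self (mul_inv_mul a)

theorem isIdempotentElem_inv_mul (a : M) : IsIdempotentElem (a⁻¹ * a) :=
  isIdempotentElem_mul_of_mul_mul_self (inv_mul_inv a)

-- `a * x` and `a * a⁻¹` are commuting idempotents absorbing each other, hence equal.
theorem inv_eq_of_mul_mul {a x : M} (h₁ : a * x * a = a) (h₂ : x * a * x = x) : a⁻¹ = x := by
  have hax : a * x = a * a⁻¹ :=
    calc a * x = a * a⁻¹ * (a * x) := by rw [← mul_assoc, mul_inv_mul]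
      _ = a * x * (a * a⁻¹) :=
        idem_comm _ _ (isIdempotentElem_mul_inv a) (isIdempotentElem_mul_of_mul_mul_self h₁)
      _ = a * a⁻¹ := by rw [← mul_assoc, h₁]
  have hxa : x * a = a⁻¹ * a :=
    calc x * a = x * a * (a⁻¹ * a) := by rw [mul_assoc x a, ← mul_assoc a, mul_inv_mul]
      _ = a⁻¹ * a * (x * a) :=
        idem_comm _ _ (isIdempotentElem_mul_of_mul_mul_self h₂) (isIdempotentElem_inv_mul a)
      _ = a⁻¹ * a := by rw [mul_assoc, ← mul_assoc a, h₁]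
  calc a⁻¹ = a⁻¹ * a * a⁻¹ := (inv_mul_inv a).symm
    _ = x * (a * x) := by rw [← hxa, hax, mul_assoc]
    _ = x := by rw [← mul_assoc, h₂]

theorem inv_eq_self_of_isIdempotentElem {e : M} (he : IsIdempotentElem e) : e⁻¹ = e :=
  inv_eq_of_mul_mul (by rw [he.eq, he.eq]) (by rw [he.eq, he.eq])

theorem mul_inv_rev (s t : M) : (s * t)⁻¹ = t⁻¹ * s⁻¹ := by
  have hcomm : t * t⁻¹ * (s⁻¹ * s) = s⁻¹ * s * (t * t⁻¹) :=
    idem_comm _ _ (isIdempotentElem_mul_inv t) (isIdempotentElem_inv_mul s)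
  refine inv_eq_of_mul_mul ?_ ?_
  · calc s * t * (t⁻¹ * s⁻¹) * (s * t) = s * (t * t⁻¹ * (s⁻¹ * s)) * t := by
          simp only [mul_assoc]
      _ = s * s⁻¹ * s * (t * t⁻¹ * t) := by rw [hcomm]; simp only [mul_assoc]
      _ = s * t := by rw [mul_inv_mul, mul_inv_mul]
  · calc t⁻¹ * s⁻¹ * (s * t) * (t⁻¹ * s⁻¹) = t⁻¹ * (s⁻¹ * s * (t * t⁻¹)) * s⁻¹ := by
          simp only [mul_assoc]
      _ = t⁻¹ * t * t⁻¹ * (s⁻¹ * s * s⁻¹) := by rw [← hcomm]; simp only [mul_assoc]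
      _ = t⁻¹ * s⁻¹ := by rw [inv_mul_inv, inv_mul_inv]

theorem isIdempotentElem_inv_mul_mul {e : M} (he : IsIdempotentElem e) (s : M) :
    IsIdempotentElem (s⁻¹ * e * s) := by
  have hcomm : s * s⁻¹ * e = e * (s * s⁻¹) := idem_comm _ _ (isIdempotentElem_mul_inv s) he
  calc s⁻¹ * e * s * (s⁻¹ * e * s) = s⁻¹ * e * (s * s⁻¹ * e) * s := by simp only [mul_assoc]
    _ = s⁻¹ * (e * e) * (s * s⁻¹ * s) := by rw [hcomm]; simp only [mul_assoc]
    _ = s⁻¹ * e * s := by rw [he.eq, mul_inv_mul]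

theorem inv_mul_mul_mul_inv {e : M} (he : IsIdempotentElem e) (s : M) :
    s⁻¹ * e * s * s⁻¹ = s⁻¹ * e := by
  calc s⁻¹ * e * s * s⁻¹ = s⁻¹ * (e * (s * s⁻¹)) := by simp only [mul_assoc]
    _ = s⁻¹ * s * s⁻¹ * e := by
      rw [idem_comm _ _ he (isIdempotentElem_mul_inv s)]; simp only [mul_assoc]
    _ = s⁻¹ * e := by rw [inv_mul_inv]

theorem mul_inv_mul_mul {e : M} (he : IsIdempotentElem e) (s : M) :
    s * (s⁻¹ * e * s) = e * s := by
  calc s * (s⁻¹ * e * s) = s * s⁻¹ * e * s := by simp only [mul_assoc]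
    _ = e * (s * s⁻¹ * s) := by
      rw [idem_comm _ _ (isIdempotentElem_mul_inv s) he]; simp only [mul_assoc]
    _ = e * s := by rw [mul_inv_mul]

end InverseMonoid

open InverseMonoid

namespace SemiregularGroupoid

variable {V : Type*} [InverseMonoid V] {G : Type*} (S : SemiregularGroupoid V G)

theorem actL_actR_actL_actR (x y z w : V) (γ : G) :
    S.actL x (S.actR (S.actL y (S.actR γ z)) w) = S.actL (x * y) (S.actR γ (z * w)) := by
  rw [S.actL_actR, ← S.actR_mul, ← S.actL_mul]

theorem phiMap_phiMap {f g : V} (hgf : g * f = g) (hfg : f * g = g) (γ : G) :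
    phiMap S g (phiMap S f γ) = phiMap S g γ := by
  rw [phiMap, phiMap, actL_actR_actL_actR, hgf, hfg, phiMap]

theorem mem_bowtiePi_iff {e : V} (he : IsIdempotentElem e) {γ : G} :
    γ ∈ bowtiePi S e ↔ S.d γ = e ∧ S.r γ = e ∧ phiMap S e γ = γ := by
  simp only [bowtiePi, bowtieStar, Set.mem_ofPred_eq]
  constructor
  · rintro ⟨⟨α, hd, rfl⟩, hr⟩
    refine ⟨by rw [S.d_actL, S.d_actR, hd, he.eq, he.eq], hr, ?_⟩
    rw [phiMap, actL_actR_actL_actR, he.eq]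
  · rintro ⟨hd, hr, hfix⟩
    exact ⟨⟨γ, hd, hfix.symm⟩, hr⟩

theorem actR_eq_self_of_phiMap_eq_self {e : V} (he : IsIdempotentElem e) {γ : G}
    (hfix : phiMap S e γ = γ) : S.actR γ e = γ := by
  conv_lhs => rw [← hfix]
  rw [phiMap, S.actL_actR, ← S.actR_mul, he.eq]
  exact hfix

theorem actL_eq_self_of_phiMap_eq_self {e : V} (he : IsIdempotentElem e) {γ : G}
    (hfix : phiMap S e γ = γ) : S.actL e γ = γ := by
  conv_lhs => rw [← hfix]
  rw [phiMap, ← S.actL_mul, he.eq]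
  exact hfix

theorem star_eq_comp_of_mem_bowtiePi {e : V} (he : IsIdempotentElem e) {γ δ : G}
    (hγ : γ ∈ bowtiePi S e) (hδ : δ ∈ bowtiePi S e) : S.star γ δ = S.comp γ δ := by
  obtain ⟨-, hγr, hγfix⟩ := (S.mem_bowtiePi_iff he).1 hγ
  obtain ⟨hδd, -, hδfix⟩ := (S.mem_bowtiePi_iff he).1 hδ
  rw [star, hδd, hγr, S.actR_eq_self_of_phiMap_eq_self he hγfix,
    S.actL_eq_self_of_phiMap_eq_self he hδfix]

theorem actM_mem_bowtiePi {e : V} (he : IsIdempotentElem e) (s : V) {γ : G}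
    (hγ : γ ∈ bowtiePi S e) :
    actM S s γ ∈ bowtiePi S (s⁻¹ * e * s) := by
  obtain ⟨hd, hr, hfix⟩ := (S.mem_bowtiePi_iff he).1 hγ
  refine (S.mem_bowtiePi_iff (isIdempotentElem_inv_mul_mul he s)).2 ⟨?_, ?_, ?_⟩
  · rw [actM, S.d_actL, S.d_actR, hd, mul_assoc]
  · rw [actM, S.r_actL, S.r_actR, hr, mul_assoc]
  · rw [actM, phiMap, actL_actR_actL_actR, inv_mul_mul_mul_inv he, mul_inv_mul_mul he,
      S.actL_mul, S.actR_mul, ← S.actL_actR]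
    exact congrArg (fun α => S.actL s⁻¹ (S.actR α s)) hfix

theorem actM_star {e : V} (he : IsIdempotentElem e) (s : V) {γ δ : G} (hγ : γ ∈ bowtiePi S e)
    (hδ : δ ∈ bowtiePi S e) :
    actM S s (S.star γ δ) = S.star (actM S s γ) (actM S s δ) := by
  have hcomposable : S.r γ = S.d δ := by
    rw [((S.mem_bowtiePi_iff he).1 hγ).2.1, ((S.mem_bowtiePi_iff he).1 hδ).1]
  have he' := isIdempotentElem_inv_mul_mul he s
  rw [S.star_eq_comp_of_mem_bowtiePi he hγ hδ, S.star_eq_comp_of_mem_bowtiePi he'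
    (S.actM_mem_bowtiePi he s hγ) (S.actM_mem_bowtiePi he s hδ), actM,
    S.actR_comp γ δ s hcomposable,
    S.actL_comp _ _ _ (by rw [S.r_actR, S.d_actR, hcomposable])]
  rfl

theorem phiMap_eq_actM {f : V} (hf : IsIdempotentElem f) (γ : G) :
    phiMap S f γ = actM S f γ := by
  rw [phiMap, actM, inv_eq_self_of_isIdempotentElem hf]

theorem phiMap_mem_bowtiePi {e f : V} (he : IsIdempotentElem e) (hf : IsIdempotentElem f)
    (hfe : f * e = f) {γ : G} (hγ : γ ∈ bowtiePi S e) : phiMap S f γ ∈ bowtiePi S f := by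
  have h := S.actM_mem_bowtiePi he f hγ
  rwa [inv_eq_self_of_isIdempotentElem hf, hfe, hf.eq, ← S.phiMap_eq_actM hf] at h

theorem phiMap_star {e f : V} (he : IsIdempotentElem e) (hf : IsIdempotentElem f) {γ δ : G}
    (hγ : γ ∈ bowtiePi S e) (hδ : δ ∈ bowtiePi S e) :
    phiMap S f (S.star γ δ) = S.star (phiMap S f γ) (phiMap S f δ) := by
  simp only [S.phiMap_eq_actM hf]
  exact S.actM_star he f hγ hδ

theorem actM_mul (s t : V) (γ : G) : actM S (s * t) γ = actM S t (actM S s γ) := by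
  rw [actM, actM, actM, InverseMonoid.mul_inv_rev, S.actR_mul, S.actL_mul, S.actL_actR]

theorem actM_id (s e : V) : actM S s (S.id e) = S.id (s⁻¹ * e * s) := by
  rw [actM, S.actR_id, S.actL_id, mul_assoc]

theorem actM_eq_phiMap_of_mem {e e' : V} (he : IsIdempotentElem e) (he' : IsIdempotentElem e')
    {γ : G} (hγ : γ ∈ bowtiePi S e) : actM S e' γ = phiMap S (e * e') γ := by
  have hfix := ((S.mem_bowtiePi_iff he).1 hγ).2.2
  rw [phiMap, S.actR_mul, S.actR_eq_self_of_phiMap_eq_self he hfix, idem_comm e e' he he',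
    S.actL_mul, ← S.actL_actR, S.actL_eq_self_of_phiMap_eq_self he hfix, actM,
    inv_eq_self_of_isIdempotentElem he']

end SemiregularGroupoid

open SemiregularGroupoid

theorem stmt11_general {V : Type*} [InverseMonoid V] {G : Type*}
    (S : SemiregularGroupoid V G)
    (e f g : V) (he : e * e = e) (hf : f * f = f) (hg : g * g = g)
    (hfe : f * e = f) (hgf : g * f = g) :
    -- φ_f^e maps π_e^⋈ into π_f^⋈ and is a homomorphism
    (∀ γ ∈ bowtiePi S e, phiMap S f γ ∈ bowtiePi S f) ∧
    (∀ γ ∈ bowtiePi S e, ∀ δ ∈ bowtiePi S e,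
      phiMap S f (S.star γ δ) = S.star (phiMap S f γ) (phiMap S f δ)) ∧
    -- φ_e^e is the identity
    (∀ γ ∈ bowtiePi S e, phiMap S e γ = γ) ∧
    -- φ_f^e φ_g^f = φ_g^e
    (∀ γ ∈ bowtiePi S e, phiMap S g (phiMap S f γ) = phiMap S g γ) ∧
    -- the action maps π_e^⋈ into π_{s⁻¹es}^⋈
    (∀ s : V, ∀ γ ∈ bowtiePi S e, actM S s γ ∈ bowtiePi S (s⁻¹ * e * s)) ∧
    -- (a ⊕ b) ◁ s = (a ◁ s) ⊕ (b ◁ s)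
    (∀ s : V, ∀ γ ∈ bowtiePi S e, ∀ δ ∈ bowtiePi S e,
      actM S s (S.star γ δ) = S.star (actM S s γ) (actM S s δ)) ∧
    -- a ◁ (st) = (a ◁ s) ◁ t
    (∀ s t : V, ∀ γ ∈ bowtiePi S e, actM S (s * t) γ = actM S t (actM S s γ)) ∧
    -- a ◁ e' = a ⊕ 0_{e'}, i.e. acting by an idempotent e' is the structure map to
    -- the component at e * e'
    (∀ e' : V, e' * e' = e' → ∀ γ ∈ bowtiePi S e, actM S e' γ = phiMap S (e * e') γ) ∧
    -- 0_{e'} ◁ s = 0_{s⁻¹e's}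
    (∀ e' : V, e' * e' = e' → ∀ s : V, actM S s (S.id e') = S.id (s⁻¹ * e' * s)) := by
  have hfg : f * g = g := (InverseMonoid.idem_comm f g hf hg).trans hgf
  refine ⟨fun γ hγ => phiMap_mem_bowtiePi S he hf hfe hγ,
    fun γ hγ δ hδ => phiMap_star S he hf hγ hδ,
    fun γ hγ => ((mem_bowtiePi_iff S he).1 hγ).2.2,
    fun γ _ => phiMap_phiMap S hgf hfg γ,
    fun s γ hγ => actM_mem_bowtiePi S he s hγ,
    fun s γ hγ δ hδ => actM_star S he s hγ hδ,
    fun s t γ _ => actM_mul S s t γ,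
    fun e' he' γ hγ => actM_eq_phiMap_of_mem S he he' hγ,
    fun e' _ s => actM_id S s e'⟩

/-- in a monoidal pseudoregular groupoid, for idempotents `e ≥ f ≥ g`
of `V(G)` the maps `φ_f^e : π_e^⋈(G) → π_f^⋈(G)`, `α ↦ f ▷ α ◁ f`, are group
homomorphisms forming a presheaf (`φ_e^e = id`, `φ_f^e φ_g^f = φ_g^e`), and the action
`α ◁ s = s⁻¹ ▷ α ◁ s` makes `{π_e^⋈(G)}` a `V(G)`-module in the sense of Lausch. -/
theorem stmt11 {V : Type*} [InverseMonoid V] {G : Type*}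
    (S : SemiregularGroupoid V G)
    (hmonoidal : ∀ α β : G, S.star α β = S.ostar α β)
    (e f g : V) (he : e * e = e) (hf : f * f = f) (hg : g * g = g)
    (hfe : f * e = f) (hgf : g * f = g) :
    -- φ_f^e maps π_e^⋈ into π_f^⋈ and is a homomorphism
    (∀ γ ∈ bowtiePi S e, phiMap S f γ ∈ bowtiePi S f) ∧
    (∀ γ ∈ bowtiePi S e, ∀ δ ∈ bowtiePi S e,
      phiMap S f (S.star γ δ) = S.star (phiMap S f γ) (phiMap S f δ)) ∧
    -- φ_e^e is the identity
    (∀ γ ∈ bowtiePi S e, phiMap S e γ = γ) ∧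
    -- φ_f^e φ_g^f = φ_g^e
    (∀ γ ∈ bowtiePi S e, phiMap S g (phiMap S f γ) = phiMap S g γ) ∧
    -- the action maps π_e^⋈ into π_{s⁻¹es}^⋈
    (∀ s : V, ∀ γ ∈ bowtiePi S e, actM S s γ ∈ bowtiePi S (s⁻¹ * e * s)) ∧
    -- (a ⊕ b) ◁ s = (a ◁ s) ⊕ (b ◁ s)
    (∀ s : V, ∀ γ ∈ bowtiePi S e, ∀ δ ∈ bowtiePi S e,
      actM S s (S.star γ δ) = S.star (actM S s γ) (actM S s δ)) ∧
    -- a ◁ (st) = (a ◁ s) ◁ t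
    (∀ s t : V, ∀ γ ∈ bowtiePi S e, actM S (s * t) γ = actM S t (actM S s γ)) ∧
    -- a ◁ e' = a ⊕ 0_{e'}, i.e. acting by an idempotent e' is the structure map to
    -- the component at e * e'
    (∀ e' : V, e' * e' = e' → ∀ γ ∈ bowtiePi S e, actM S e' γ = phiMap S (e * e') γ) ∧
    -- 0_{e'} ◁ s = 0_{s⁻¹e's}
    (∀ e' : V, e' * e' = e' → ∀ s : V, actM S s (S.id e') = S.id (s⁻¹ * e' * s)) :=
  stmt11_general S e f g he hf hg hfe hgf
end

section
/- In the setting of the Squier complex of an inverse monoid presentation, for each idempotent e of T, the set star_e^⋈ = {e ▷ α ◁ e : α a path with αd = e} in the fundamental groupoid π(Sq(P),T) is a group under the operation ∗, with identity 1_e, where the inverse of α is (αr)⁻¹ ▷ α° ◁ (αd)⁻¹ (here ° denotes the groupoid inverse and ⁻¹ the inverse in T). -/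
namespace InverseMonoid

variable {M : Type*} [InverseMonoid M]

theorem inv_mul_self_idem (a : M) : a⁻¹ * a * (a⁻¹ * a) = a⁻¹ * a := by
  rw [← mul_assoc, InverseMonoid.inv_mul_inv]

theorem mul_inv_self_idem (a : M) : a * a⁻¹ * (a * a⁻¹) = a * a⁻¹ := by
  rw [← mul_assoc, InverseMonoid.mul_inv_mul]

/-- Each of `e⁻¹ * e` and `e * e⁻¹` commutes with `e`, which forces both to equal `e`. -/
theorem inv_eq_self_of_mul_self {e : M} (he : e * e = e) : e⁻¹ = e := by
  have h₁ : e⁻¹ * e = e :=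
    calc e⁻¹ * e = e⁻¹ * e * e := by rw [mul_assoc, he]
      _ = e * (e⁻¹ * e) := InverseMonoid.idem_comm _ _ (inv_mul_self_idem e) he
      _ = e := by rw [← mul_assoc, InverseMonoid.mul_inv_mul]
  have h₂ : e * e⁻¹ = e :=
    calc e * e⁻¹ = e * (e * e⁻¹) := by rw [← mul_assoc, he]
      _ = e * e⁻¹ * e := InverseMonoid.idem_comm _ _ he (mul_inv_self_idem e)
      _ = e := InverseMonoid.mul_inv_mul e
  calc e⁻¹ = e⁻¹ * e * e⁻¹ := (InverseMonoid.inv_mul_inv e).symm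
    _ = e := by rw [h₁, h₂]

end InverseMonoid

namespace SemiregularGroupoid

section

variable {V : Type*} [Monoid V] {G : Type*} (S : SemiregularGroupoid V G)

theorem eq_inv_of_comp_eq_id {α δ : G} (h : S.r α = S.d δ)
    (hid : S.comp α δ = S.id (S.d α)) : δ = S.inv α :=
  calc δ = S.comp (S.id (S.r α)) δ := by rw [h, S.id_comp]
    _ = S.comp (S.comp (S.inv α) α) δ := by rw [S.inv_comp]
    _ = S.comp (S.inv α) (S.comp α δ) := S.comp_assoc _ _ _ (S.r_inv α) h
    _ = S.inv α := by rw [hid, ← S.r_inv, S.comp_id]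

theorem inv_actL (x : V) (γ : G) : S.inv (S.actL x γ) = S.actL x (S.inv γ) := by
  refine (S.eq_inv_of_comp_eq_id ?_ ?_).symm
  · rw [S.r_actL, S.d_actL, S.d_inv]
  · rw [← S.actL_comp x γ (S.inv γ) (S.d_inv γ).symm, S.comp_inv, S.actL_id, S.d_actL]

theorem inv_actR (γ : G) (x : V) : S.inv (S.actR γ x) = S.actR (S.inv γ) x := by
  refine (S.eq_inv_of_comp_eq_id ?_ ?_).symm
  · rw [S.r_actR, S.d_actR, S.d_inv]
  · rw [← S.actR_comp γ (S.inv γ) x (S.d_inv γ).symm, S.comp_inv, S.actR_id, S.d_actR]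

theorem star_composable (α β : G) : S.r (S.actR α (S.d β)) = S.d (S.actL (S.r α) β) := by
  rw [S.r_actR, S.d_actL]

theorem d_star (α β : G) : S.d (S.star α β) = S.d α * S.d β := by
  rw [star, S.d_comp _ _ (S.star_composable α β), S.d_actR]

theorem r_star (α β : G) : S.r (S.star α β) = S.r α * S.r β := by
  rw [star, S.r_comp _ _ (S.star_composable α β), S.r_actL]

theorem actL_star (x : V) (α β : G) : S.actL x (S.star α β) = S.star (S.actL x α) β := by
  rw [star, star, S.actL_comp _ _ _ (S.star_composable α β), ← S.actL_mul, ← S.actL_actR,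
    S.r_actL]

theorem star_actR (α β : G) (y : V) : S.actR (S.star α β) y = S.star α (S.actR β y) := by
  rw [star, star, S.actR_comp _ _ _ (S.star_composable α β), ← S.actR_mul, S.actL_actR,
    S.d_actR]

theorem star_assoc (α β γ : G) : S.star (S.star α β) γ = S.star α (S.star β γ) := by
  have h₁ : S.r (S.actR α (S.d β * S.d γ)) = S.d (S.actL (S.r α) (S.actR β (S.d γ))) := by
    rw [S.r_actR, S.d_actL, S.d_actR]
  have h₂ : S.r (S.actL (S.r α) (S.actR β (S.d γ))) =
      S.d (S.actL (S.r α) (S.actL (S.r β) γ)) := by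
    rw [S.r_actL, S.r_actR, S.d_actL, S.d_actL]
  rw [star.eq_1 S (S.star α β), star_actR, r_star, S.actL_mul, star.eq_1 S α (S.actR β _),
    S.d_actR, S.comp_assoc _ _ _ h₁ h₂, star.eq_1 S α (S.star β γ), d_star, star.eq_1 S β γ,
    S.actL_comp _ _ _ (S.star_composable β γ)]

theorem id_star (v : V) (α : G) : S.star (S.id v) α = S.actL v α := by
  rw [star, S.actR_id, S.r_id, ← S.d_actL, S.id_comp]

theorem star_id (α : G) (v : V) : S.star α (S.id v) = S.actR α v := by
  rw [star, S.d_id, S.actL_id, ← S.r_actR, S.comp_id]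

end

section

variable {V : Type*} [InverseMonoid V] {G : Type*} (S : SemiregularGroupoid V G) {e : V}

theorem mem_bowtieStar_iff (he : e * e = e) {γ : G} :
    γ ∈ bowtieStar S e ↔ S.d γ = e ∧ S.actL e γ = γ ∧ S.actR γ e = γ := by
  constructor
  · rintro ⟨α, hα, rfl⟩
    refine ⟨by rw [S.d_actL, S.d_actR, hα, he, he], by rw [← S.actL_mul, he], ?_⟩
    rw [S.actL_actR, ← S.actR_mul, he]
  · rintro ⟨hd, hL, hR⟩
    exact ⟨γ, hd, by rw [hR, hL]⟩

theorem id_mem_bowtieStar (he : e * e = e) : S.id e ∈ bowtieStar S e :=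
  ⟨S.id e, S.d_id e, by rw [S.actR_id, he, S.actL_id, he]⟩

theorem star_mem_bowtieStar (he : e * e = e) {α β : G} (hα : α ∈ bowtieStar S e)
    (hβ : β ∈ bowtieStar S e) : S.star α β ∈ bowtieStar S e := by
  obtain ⟨hdα, hLα, -⟩ := (S.mem_bowtieStar_iff he).1 hα
  obtain ⟨hdβ, -, hRβ⟩ := (S.mem_bowtieStar_iff he).1 hβ
  refine (S.mem_bowtieStar_iff he).2 ⟨?_, ?_, ?_⟩
  · rw [d_star, hdα, hdβ, he]
  · rw [actL_star, hLα]
  · rw [star_actR, hRβ]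

theorem id_star_of_mem_bowtieStar (he : e * e = e) {α : G} (hα : α ∈ bowtieStar S e) :
    S.star (S.id e) α = α := by
  rw [id_star, ((S.mem_bowtieStar_iff he).1 hα).2.1]

theorem star_id_of_mem_bowtieStar (he : e * e = e) {α : G} (hα : α ∈ bowtieStar S e) :
    S.star α (S.id e) = α := by
  rw [star_id, ((S.mem_bowtieStar_iff he).1 hα).2.2]

theorem actL_actR_inv_of_mem_bowtieStar (he : e * e = e) {α : G} (hα : α ∈ bowtieStar S e) :
    S.actL (S.r α)⁻¹ (S.actR (S.inv α) (S.d α)⁻¹) = S.actL (S.r α)⁻¹ (S.inv α) := by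
  obtain ⟨hd, -, hR⟩ := (S.mem_bowtieStar_iff he).1 hα
  rw [hd, InverseMonoid.inv_eq_self_of_mul_self he, ← inv_actR, hR]

theorem actL_inv_mem_bowtieStar (he : e * e = e) {α : G} (hα : α ∈ bowtieStar S e)
    (hr : (S.r α)⁻¹ * S.r α = e) : S.actL (S.r α)⁻¹ (S.inv α) ∈ bowtieStar S e := by
  obtain ⟨-, -, hR⟩ := (S.mem_bowtieStar_iff he).1 hα
  refine (S.mem_bowtieStar_iff he).2 ⟨?_, ?_, ?_⟩
  · rw [S.d_actL, S.d_inv, hr]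
  · rw [← S.actL_mul, ← hr, InverseMonoid.inv_mul_inv]
  · rw [S.actL_actR, ← inv_actR, hR]

theorem star_actL_inv (he : e * e = e) {α : G} (hα : α ∈ bowtieStar S e)
    (hr : S.r α * (S.r α)⁻¹ = e) (hr' : (S.r α)⁻¹ * S.r α = e) :
    S.star α (S.actL (S.r α)⁻¹ (S.inv α)) = S.id e := by
  obtain ⟨hd, hL, hR⟩ := (S.mem_bowtieStar_iff he).1 hα
  rw [star, S.d_actL, S.d_inv, hr', hR, ← S.actL_mul, hr, ← inv_actL, hL, S.comp_inv, hd]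

theorem actL_inv_star (he : e * e = e) {α : G} (hα : α ∈ bowtieStar S e)
    (hr : S.r α * (S.r α)⁻¹ = e) (hr' : (S.r α)⁻¹ * S.r α = e) :
    S.star (S.actL (S.r α)⁻¹ (S.inv α)) α = S.id e := by
  obtain ⟨hd, -, hR⟩ := (S.mem_bowtieStar_iff he).1 hα
  have hre : (S.r α)⁻¹ * e = (S.r α)⁻¹ := by
    rw [← hr, ← mul_assoc, InverseMonoid.inv_mul_inv]
  rw [star, hd, S.actL_actR, ← inv_actR, hR, S.r_actL, S.r_inv, hd, hre,
    ← S.actL_comp _ _ _ (S.r_inv α), S.inv_comp, S.actL_id, hr']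

end

end SemiregularGroupoid

/-- in the pseudoregular fundamental groupoid `π(Sq(P),T)` of the Squier
complex, for each idempotent `e` of `T` the set `star_e^⋈ = {e ▷ α ◁ e : αd = e}` is a
group under `∗` with identity `1_e`, the inverse of `α` being
`(αr)⁻¹ ▷ α° ◁ (αd)⁻¹`.  The hypothesis `hK` records that the vertex set of the
component of `e` is the group `K_e = {a ∈ T : aψ = e}` with identity `e`: the range of
any arrow starting at `e` is a group element over `e`. -/
theorem stmt16 {T : Type*} [InverseMonoid T] {Γ : Type*}
    (S : SemiregularGroupoid T Γ) (e : T) (he : e * e = e)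
    (hK : ∀ γ : Γ, S.d γ = e →
      S.r γ * (S.r γ)⁻¹ = e ∧ (S.r γ)⁻¹ * S.r γ = e) :
    (S.id e ∈ bowtieStar S e) ∧
    (∀ α ∈ bowtieStar S e, ∀ β ∈ bowtieStar S e, S.star α β ∈ bowtieStar S e) ∧
    (∀ α ∈ bowtieStar S e, ∀ β ∈ bowtieStar S e, ∀ γ ∈ bowtieStar S e,
      S.star (S.star α β) γ = S.star α (S.star β γ)) ∧
    (∀ α ∈ bowtieStar S e, S.star (S.id e) α = α ∧ S.star α (S.id e) = α) ∧
    (∀ α ∈ bowtieStar S e,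
      S.actL (S.r α)⁻¹ (S.actR (S.inv α) (S.d α)⁻¹) ∈ bowtieStar S e ∧
      S.star α (S.actL (S.r α)⁻¹ (S.actR (S.inv α) (S.d α)⁻¹)) = S.id e ∧
      S.star (S.actL (S.r α)⁻¹ (S.actR (S.inv α) (S.d α)⁻¹)) α = S.id e) := by
  refine ⟨S.id_mem_bowtieStar he, fun α hα β hβ => S.star_mem_bowtieStar he hα hβ,
    fun α _ β _ γ _ => S.star_assoc α β γ,
    fun α hα => ⟨S.id_star_of_mem_bowtieStar he hα, S.star_id_of_mem_bowtieStar he hα⟩,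
    fun α hα => ?_⟩
  obtain ⟨hr, hr'⟩ := hK α ((S.mem_bowtieStar_iff he).1 hα).1
  rw [S.actL_actR_inv_of_mem_bowtieStar he hα]
  exact ⟨S.actL_inv_mem_bowtieStar he hα hr', S.star_actL_inv he hα hr hr',
    S.actL_inv_star he hα hr hr'⟩
end
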